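/- For every countable ordinal α there exists a conciliatory function U: ω̂^ω → ω̂^ω that is simultaneously Σ⁰_{1+ω^α}-universal and initializable. -/

import Mathlib

/-!
Common definitions for formalizing "On the structure of the Wadge degrees of bqo-valued
Borel functions" by Kihara and Montalbán.
-/

open scoped Classical
noncomputable section

namespace WadgeStudy

/-! ### Baire space `ω^ω` -/

/-- Baire space `ω^ω`: the product of countably many copies of discrete `ω`. -/
abbrev Baire : Type := ℕ → ℕ

/-- The basic clopen set `[σ]` of all infinite sequences extending the finite string `σ`. -/
def cylB (σ : List ℕ) : Set Baire := {X | ∀ i : Fin σ.length, X i = σ.get i}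

/-- The finite initial segment `X↾n` of `X ∈ ω^ω`. -/
def initSeg (X : Baire) (n : ℕ) : List ℕ := List.ofFn fun i : Fin n => X i

/-- Concatenation `σ⌢X` of a finite string and an infinite sequence. -/
def appendStr (σ : List ℕ) (X : Baire) : Baire := fun i =>
  if h : i < σ.length then σ.get ⟨i, h⟩ else X (i - σ.length)

/-! ### The Borel hierarchy -/

/-- The Borel hierarchy: `Σ⁰₁` sets are the open sets; for `α > 1`, a set is `Σ⁰_α` if it is
a countable union of sets each of which is `Π⁰_β` (i.e. has `Σ⁰_β` complement) for some
`β < α`. -/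
inductive SigmaZero (X : Type*) [TopologicalSpace X] : Ordinal.{0} → Set X → Prop
  | of_isOpen {s : Set X} : IsOpen s → SigmaZero X 1 s
  | iUnion {α : Ordinal} (hα : 1 < α) (f : ℕ → Set X) (β : ℕ → Ordinal)
      (hβ : ∀ n, β n < α) (hf : ∀ n, SigmaZero X (β n) (f n)ᶜ) :
      SigmaZero X α (⋃ n, f n)

/-- `Π⁰_α` sets are the complements of `Σ⁰_α` sets. -/
def PiZero (X : Type*) [TopologicalSpace X] (α : Ordinal.{0}) (s : Set X) : Prop :=
  SigmaZero X α sᶜ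

/-- `Δ⁰_α = Σ⁰_α ∩ Π⁰_α`. -/
def DeltaZero (X : Type*) [TopologicalSpace X] (α : Ordinal.{0}) (s : Set X) : Prop :=
  SigmaZero X α s ∧ PiZero X α s

/-- A countable ordinal. -/
def IsCountableOrd (ξ : Ordinal.{0}) : Prop := ξ.card ≤ Cardinal.aleph0

/-- `A : X → Q` (with `Q` carrying the discrete topology) is `Δ⁰_ξ`-measurable iff its range is
countable and every fiber is `Δ⁰_ξ`. -/
def DeltaMeasurable {X : Type*} [TopologicalSpace X] {Q : Type*} (ξ : Ordinal.{0}) (A : X → Q) :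
    Prop :=
  (Set.range A).Countable ∧ ∀ q : Q, DeltaZero X ξ (A ⁻¹' {q})

/-- A function into Baire space is `Σ⁰_ξ`-measurable if the preimage of every basic clopen set
is `Σ⁰_ξ`. -/
def SigmaMeasurable {X : Type*} [TopologicalSpace X] (ξ : Ordinal.{0}) (D : X → Baire) : Prop :=
  ∀ σ : List ℕ, SigmaZero X ξ (D ⁻¹' cylB σ)

/-- A `Q`-valued function is Borel if it is `Δ⁰_ξ`-measurable for some countable ordinal `ξ`. -/
def BorelMeasurable {X : Type*} [TopologicalSpace X] {Q : Type*} (A : X → Q) : Prop :=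
  ∃ ξ : Ordinal.{0}, IsCountableOrd ξ ∧ DeltaMeasurable ξ A

/-! ### Wadge reducibility of `Q`-valued functions -/

/-- `Q`-Wadge reducibility: `A ≤_w B` iff there is a continuous `θ` from the domain of `A` to
the domain of `B` with `A X ≤_Q B (θ X)` for all `X`. -/
def WadgeLE {X Y : Type*} [TopologicalSpace X] [TopologicalSpace Y] {Q : Type*} [Preorder Q]
    (A : X → Q) (B : Y → Q) : Prop :=
  ∃ θ : X → Y, Continuous θ ∧ ∀ x, A x ≤ B (θ x)

/-- `Q`-Wadge equivalence. -/
def WadgeEquiv {X Y : Type*} [TopologicalSpace X] [TopologicalSpace Y] {Q : Type*} [Preorder Q]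
    (A : X → Q) (B : Y → Q) : Prop :=
  WadgeLE A B ∧ WadgeLE B A

/-- `A` is self-dual if there is a continuous `θ` with `A (θ X) ≰_Q A X` for all `X`. -/
def SelfDual {Q : Type*} [Preorder Q] (A : Baire → Q) : Prop :=
  ∃ θ : Baire → Baire, Continuous θ ∧ ∀ X, ¬ A (θ X) ≤ A X

/-- The function `A↾[σ] : X ↦ A (σ⌢X)`. -/
def restrictCyl {Q : Type*} (A : Baire → Q) (σ : List ℕ) : Baire → Q :=
  fun X => A (appendStr σ X)

/-- `A` is initializable if `A ≤_w A↾[σ]` for every finite string `σ`. -/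
def Initializable {Q : Type*} [Preorder Q] (A : Baire → Q) : Prop :=
  ∀ σ : List ℕ, WadgeLE A (restrictCyl A σ)

/-- `F(A) = {X : ∀ n, A↾[X↾n] ≡_w A}`. -/
def FSet {Q : Type*} [Preorder Q] (A : Baire → Q) : Set Baire :=
  {X | ∀ n : ℕ, WadgeEquiv (restrictCyl A (initSeg X n)) A}

/-- The countable join `⊕_n A_n`, defined by `(⊕_n A_n)(n⌢X) = A_n X`. -/
def oplus {Q : Type*} (A : ℕ → Baire → Q) : Baire → Q :=
  fun X => A (X 0) fun n => X (n + 1)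

/-- A Borel function `A` is σ-join-reducible if its `Q`-Wadge degree is the least upper bound
of a countable collection of `Q`-Wadge degrees (of Borel functions) each strictly below it. -/
def SigmaJoinReducible {Q : Type*} [Preorder Q] (A : Baire → Q) : Prop :=
  ∃ B : ℕ → Baire → Q,
    (∀ n, BorelMeasurable (B n)) ∧
    (∀ n, WadgeLE (B n) A ∧ ¬ WadgeLE A (B n)) ∧
    ∀ C : Baire → Q, BorelMeasurable C → (∀ n, WadgeLE (B n) C) → WadgeLE A C

/-! ### Better quasi-orders -/

/-- Removing the first entry of a strictly increasing sequence. -/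
def dropMin (X : {X : Baire // StrictMono X}) : {X : Baire // StrictMono X} :=
  ⟨fun n => X.1 (n + 1), fun _ _ h => X.2 (Nat.add_lt_add_right h 1)⟩

/-- A quasi-order `Q` is a better-quasi-order if for every continuous `f : [ω]^ω → Q` (where
`Q` is discrete and `[ω]^ω ⊆ ω^ω` is the subspace of strictly increasing sequences) there is
`X` with `f X ≤_Q f X⁻`. -/
def IsBQO (Q : Type*) [Preorder Q] : Prop :=
  ∀ f : {X : Baire // StrictMono X} → Q,
    @Continuous _ _ _ ⊥ f → ∃ X, f X ≤ f (dropMin X)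

/-! ### Terms: nested labeled trees and forests -/

/-- `L(Q)`-terms: constants `q ∈ Q`, labelings `⟨T⟩^{ω^α}` (with `⟨T⟩ = ⟨T⟩^{ω^0}`),
trees `B → ⊔_i F_i`, and countable disjoint unions `⊔_i F_i`. -/
inductive Term (Q : Type u) : Type (max u 1)
  | const : Q → Term Q
  | jump : Ordinal.{0} → Term Q → Term Q
  | node : Term Q → (ℕ → Term Q) → Term Q
  | sup : (ℕ → Term Q) → Term Q

/-- `⟨⟩`-type (base) terms: constants and labelings. -/
def IsBase {Q : Type u} : Term Q → Prop
  | Term.const _ => True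
  | Term.jump _ _ => True
  | _ => False

/-- A rank function on terms, used to define the quasi-order `⊴` by recursion. -/
def rk {Q : Type u} : Term Q → Ordinal.{0}
  | .const _ => 0
  | .jump _ T => rk T + 1
  | .node B F => max (rk B) (Ordinal.lsub fun i => rk (F i)) + 1
  | .sup F => Ordinal.lsub (fun i => rk (F i)) + 1

theorem ord_lt_add_one (a : Ordinal.{0}) : a < a + 1 := by
  rw [Ordinal.add_one_eq_succ]; exact Order.lt_succ a

theorem rk_lt_jump {Q : Type u} (α : Ordinal.{0}) (T : Term Q) : rk T < rk (.jump α T) :=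
  ord_lt_add_one (rk T)

theorem rk_base_lt_node {Q : Type u} (B : Term Q) (F : ℕ → Term Q) :
    rk B < rk (.node B F) :=
  lt_of_le_of_lt (le_max_left _ _) (ord_lt_add_one _)

theorem rk_child_lt_node {Q : Type u} (B : Term Q) (F : ℕ → Term Q) (i : ℕ) :
    rk (F i) < rk (.node B F) :=
  lt_of_lt_of_le (Ordinal.lt_lsub _ i) (le_trans (le_max_right _ _) (le_of_lt (ord_lt_add_one _)))

theorem rk_child_lt_sup {Q : Type u} (F : ℕ → Term Q) (i : ℕ) :
    rk (F i) < rk (.sup F) :=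
  lt_of_lt_of_le (Ordinal.lt_lsub _ i) (le_of_lt (ord_lt_add_one _))

/-- The quasi-order `⊴` on terms, defined by simultaneous recursion.  A constant `q` is
identified with `⟨q⟩` (so a constant compares with a labeled term by unravelling the label)
and a `⟨⟩`-type term `B` is identified with `B → (empty forest)`, the empty forest being
`⊴`-below everything.  The clauses are:
* `p ⊴ q` iff `p ≤_Q q`;
* `⟨U⟩^{ω^α} ⊴ ⟨V⟩^{ω^β}` iff `U ⊴ V` when `α = β`, iff `⟨U⟩^{ω^α} ⊴ V` when `α > β`, and
  iff `U ⊴ ⟨V⟩^{ω^β}` when `α < β`;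
* for `S = B→⊔_i S_i` and `T = C→⊔_j T_j`: `S ⊴ T` iff either (`B ⊴ C` and `S_i ⊴ T` for
  all `i`), or (`B ⋬ C` and `S ⊴ T_j` for some `j`);
* `⊔` is interpreted as countable supremum: `⊔_i S_i ⊴ ⊔_j T_j` iff every `S_i` is `⊴` some
  `T_j`. -/
def TermLE {Q : Type u} [Preorder Q] : Term Q → Term Q → Prop
  | .const p, .const q => p ≤ q
  | .const p, .jump _ V => TermLE (.const p) V
  | .const p, .node C G =>
      (TermLE (.const p) C) ∨ (¬ TermLE (.const p) C ∧ ∃ j, TermLE (.const p) (G j))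
  | .const p, .sup G => ∃ j, TermLE (.const p) (G j)
  | .jump _ U, .const q => TermLE U (.const q)
  | .jump α U, .jump β V =>
      if α = β then TermLE U V
      else if β < α then TermLE (.jump α U) V
      else TermLE U (.jump β V)
  | .jump α U, .node C G =>
      (TermLE (.jump α U) C) ∨ (¬ TermLE (.jump α U) C ∧ ∃ j, TermLE (.jump α U) (G j))
  | .jump α U, .sup G => ∃ j, TermLE (.jump α U) (G j)
  | .node B F, .const q => TermLE B (.const q) ∧ ∀ i, TermLE (F i) (.const q)
  | .node B F, .jump β V => TermLE B (.jump β V) ∧ ∀ i, TermLE (F i) (.jump β V)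
  | .node B F, .node C G =>
      (TermLE B C ∧ ∀ i, TermLE (F i) (.node C G)) ∨
      (¬ TermLE B C ∧ ∃ j, TermLE (.node B F) (G j))
  | .node B F, .sup G => ∃ j, TermLE (.node B F) (G j)
  | .sup F, .const q => ∀ i, TermLE (F i) (.const q)
  | .sup F, .jump β V => ∀ i, TermLE (F i) (.jump β V)
  | .sup F, .node C G => ∀ i, TermLE (F i) (.node C G)
  | .sup F, .sup G => ∀ i, ∃ j, TermLE (F i) (G j)
termination_by S T => (rk S, rk T)
decreasing_by
  all_goals
    first
      | exact Prod.Lex.left _ _ (rk_lt_jump _ _)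
      | exact Prod.Lex.left _ _ (rk_base_lt_node _ _)
      | exact Prod.Lex.left _ _ (rk_child_lt_node _ _ _)
      | exact Prod.Lex.left _ _ (rk_child_lt_sup _ _)
      | exact Prod.Lex.right _ (rk_lt_jump _ _)
      | exact Prod.Lex.right _ (rk_base_lt_node _ _)
      | exact Prod.Lex.right _ (rk_child_lt_node _ _ _)
      | exact Prod.Lex.right _ (rk_child_lt_sup _ _)

/-- `S ≡ T`: `S ⊴ T` and `T ⊴ S`. -/
def TermEquiv {Q : Type u} [Preorder Q] (S T : Term Q) : Prop := TermLE S T ∧ TermLE T S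

/-- `Tree^n(Q)` for finite `n`: `Tree⁰(Q) = Q` and `Tree^{n+1}(Q) = Tree(Tree^n(Q))`, where
`Tree(Q')` consists of the one point trees `⟨q'⟩` and the trees `⟨q'⟩ → ⊔_i T_i` for
`q' ∈ Q'` and trees `T_i ∈ Tree(Q')`. -/
inductive IsTreeN {Q : Type u} : ℕ → Term Q → Prop
  | const (q : Q) : IsTreeN 0 (.const q)
  | leaf {n : ℕ} {T : Term Q} : IsTreeN n T → IsTreeN (n + 1) (.jump 0 T)
  | node {n : ℕ} {T : Term Q} {F : ℕ → Term Q} :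
      IsTreeN n T → (∀ i, IsTreeN (n + 1) (F i)) → IsTreeN (n + 1) (.node (.jump 0 T) F)

/-- `⊔Tree^n(Q)`: trees in `Tree^n(Q)` and countable disjoint unions of such trees. -/
def IsForestN {Q : Type u} (n : ℕ) (T : Term Q) : Prop :=
  IsTreeN n T ∨ ∃ F : ℕ → Term Q, T = .sup F ∧ ∀ i, IsTreeN n (F i)

/-- The exponent `α` in the normal form `ξ = ω^α + β`, `β < ω^{α+1}`. -/
def olog (ξ : Ordinal.{0}) : Ordinal.{0} := Ordinal.log Ordinal.omega0 ξ

/-- The remainder `β` in the normal form `ξ = ω^α + β`, `β < ω^{α+1}`. -/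
def obeta (ξ : Ordinal.{0}) : Ordinal.{0} := ξ - Ordinal.omega0 ^ olog ξ

/-- `Tree^ξ(Q)` for an ordinal `ξ`: writing `ξ = ω^α + β` with `β < ω^{α+1}`, one has
`Tree^ξ(Q) = Tree^{ω^α}(⟨Tree^β(Q)⟩^{ω^α})` (with `Tree⁰(Q) = Q`), where `Tree^{ω^α}(Q')` is
generated from the constants `q' ∈ Q'` (which are `⟨⟩`-type) by the labelings `⟨T⟩^{ω^γ}` for
`γ < α` (also `⟨⟩`-type) and by `T → ⊔_i F_i` for `⟨⟩`-type `T` and trees `F_i`. -/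
inductive IsTreeXi {Q : Type u} : Ordinal.{0} → Term Q → Prop
  | const {ξ : Ordinal.{0}} (q : Q) (h : obeta ξ = 0) : IsTreeXi ξ (Term.const q)
  | atom {ξ : Ordinal.{0}} {S : Term Q} (h : obeta ξ ≠ 0) (hS : IsTreeXi (obeta ξ) S) :
      IsTreeXi ξ (Term.jump (olog ξ) S)
  | jump {ξ β : Ordinal.{0}} {T : Term Q} (h0 : ξ ≠ 0) (hβ : β < olog ξ) (hT : IsTreeXi ξ T) :
      IsTreeXi ξ (Term.jump β T)
  | node {ξ : Ordinal.{0}} {B : Term Q} {F : ℕ → Term Q} (h0 : ξ ≠ 0) (hB : IsTreeXi ξ B)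
      (hbase : IsBase B) (hF : ∀ i, IsTreeXi ξ (F i)) : IsTreeXi ξ (Term.node B F)

/-- `⊔Tree^ξ(Q)`: trees in `Tree^ξ(Q)` and countable disjoint unions of such trees. -/
def IsForestXi {Q : Type u} (ξ : Ordinal.{0}) (T : Term Q) : Prop :=
  IsTreeXi ξ T ∨ ∃ F : ℕ → Term Q, T = .sup F ∧ ∀ i, IsTreeXi ξ (F i)

/-- The `k`-fold labeling `⟨⟨…⟨T⟩…⟩⟩`. -/
def labelIter {Q : Type u} : ℕ → Term Q → Term Q
  | 0, T => T
  | k + 1, T => .jump 0 (labelIter k T)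

/-- `ι(T) = T[⟨q⟩^k / q]`: replace every occurrence of a constant `q` in `T` by `⟨q⟩^k`. -/
def iotaSubst {Q : Type u} (k : ℕ) : Term Q → Term Q
  | .const q => labelIter k (.const q)
  | .jump α T => .jump α (iotaSubst k T)
  | .node B F => .node (iotaSubst k B) fun i => iotaSubst k (F i)
  | .sup F => .sup fun i => iotaSubst k (F i)

/-! ### The pointclasses `Σ_T` -/

/-- `Σ⁰_ξ`-measurability of a Baire-space valued map on the subspace `D ⊆ ω^ω`. -/
def SigmaMeasurableOn (ξ : Ordinal.{0}) (D : Set Baire) (f : Baire → Baire) : Prop :=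
  ∀ σ : List ℕ, SigmaZero (↥D) ξ ((fun x : ↥D => f x.1) ⁻¹' cylB σ)

/-- The pointclass `Σ_T` of `Q`-valued functions associated to a term `T`, relativized to a
domain `D ⊆ ω^ω` (a function defined on a nonempty closed or open subset of `ω^ω` is
identified with the corresponding total function; `SigmaT T D A` expresses `A↾D ∈ Σ_T`):
* `Σ_q` consists only of the constant function `q`;
* `A ∈ Σ_{⊔_i S_i}` iff there is a partition of the domain into relatively clopen sets `C_i`
  with `A↾C_i ∈ Σ_{S_i}` for all `i`;
* `A ∈ Σ_{T→S}` (`S = ⊔_i F_i`) iff there is a relatively open set `V` with `A↾(D∖V) ∈ Σ_T`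
  and `A↾(D∩V) ∈ Σ_S`;
* `A ∈ Σ_{⟨T⟩^{ω^α}}` iff `A = B ∘ D'` for some `Σ⁰_{1+ω^α}`-measurable `D' : ω^ω → ω^ω` and
  some `B ∈ Σ_T` (for `α = 0` this is the clause for the jump `Σ_{⟨T⟩}`, with a
  `Σ⁰₂`-measurable `D'`). -/
inductive SigmaT {Q : Type u} : Term Q → Set Baire → (Baire → Q) → Prop
  | const (q : Q) (D : Set Baire) (A : Baire → Q) (h : ∀ x ∈ D, A x = q) :
      SigmaT (Term.const q) D A
  | sup (S : ℕ → Term Q) (D : Set Baire) (A : Baire → Q) (C : ℕ → Set Baire)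
      (hcl : ∀ i, IsClopen ((fun x : ↥D => x.1) ⁻¹' C i))
      (hpart : ∀ x ∈ D, ∃! i, x ∈ C i)
      (h : ∀ i, SigmaT (S i) (D ∩ C i) A) :
      SigmaT (Term.sup S) D A
  | node (B : Term Q) (F : ℕ → Term Q) (D : Set Baire) (A : Baire → Q) (V : Set Baire)
      (hV : IsOpen ((fun x : ↥D => x.1) ⁻¹' V))
      (h1 : SigmaT B (D \ V) A)
      (h2 : SigmaT (Term.sup F) (D ∩ V) A) :
      SigmaT (Term.node B F) D A
  | jump (α : Ordinal.{0}) (T : Term Q) (D : Set Baire) (A : Baire → Q)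
      (D' : Baire → Baire) (B : Baire → Q)
      (hD : SigmaMeasurableOn (1 + Ordinal.omega0 ^ α) D D')
      (hB : SigmaT T Set.univ B)
      (hA : ∀ x ∈ D, A x = B (D' x)) :
      SigmaT (Term.jump α T) D A

/-- A total function is in `Σ_T` if it is so on the whole space. -/
def MemSigmaT {Q : Type u} (T : Term Q) (A : Baire → Q) : Prop := SigmaT T Set.univ A

/-- `Ω` is `Σ_T`-complete: `Ω ∈ Σ_T` and every function in `Σ_T` is Wadge reducible to `Ω`. -/
def SigmaTComplete {Q : Type u} [Preorder Q] (T : Term Q) (Ω : Baire → Q) : Prop :=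
  MemSigmaT T Ω ∧ ∀ A : Baire → Q, MemSigmaT T A → WadgeLE A Ω

/-! ### `ω̂ = ω ∪ {pass}`, conciliatory functions -/

/-- `ω̂ = ω ∪ {pass}`; `none` plays the role of the symbol `pass`. -/
abbrev Hat : Type := Option ℕ

instance : TopologicalSpace Hat := ⊥
instance : DiscreteTopology Hat := ⟨rfl⟩
instance : TopologicalSpace (Option Hat) := ⊥
instance : DiscreteTopology (Option Hat) := ⟨rfl⟩

/-- `ω̂^ω`, with the product topology of the discrete space `ω̂`. -/
abbrev HatBaire : Type := ℕ → Hat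

/-- Basic clopen subsets of `ω̂^ω`. -/
def cylH (σ : List Hat) : Set HatBaire := {X | ∀ i : Fin σ.length, X i = σ.get i}

/-- The index of the `k`-th non-`pass` entry of `X ∈ ω̂^ω`, if it exists. -/
def nthSome (X : HatBaire) : ℕ → Option ℕ
  | 0 => if h : ∃ i, (X i).isSome then some (Nat.find h) else none
  | k + 1 =>
    match nthSome X k with
    | none => none
    | some i => if h : ∃ j, i < j ∧ (X j).isSome then some (Nat.find h) else none

theorem nthSome_isSome (X : HatBaire) : ∀ k i, nthSome X k = some i → (X i).isSome := by
  intro k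
  induction k with
  | zero =>
    intro i h
    simp only [nthSome] at h
    split at h
    · rename_i hex
      cases h
      exact Nat.find_spec hex
    · exact absurd h (by simp)
  | succ k ih =>
    intro i h
    simp only [nthSome] at h
    split at h
    · exact absurd h (by simp)
    · rename_i j hj
      split at h
      · rename_i hex
        cases h
        exact (Nat.find_spec hex).2
      · exact absurd h (by simp)

theorem nthSome_succ_none {X : HatBaire} {k : ℕ} (h : nthSome X k = none) :
    nthSome X (k + 1) = none := by
  simp only [nthSome, h]

/-- `X^p ∈ ω^{≤ω}`: the finite or infinite sequence obtained from `X ∈ ω̂^ω` by deleting all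
occurrences of `pass`. -/
def strip (X : HatBaire) : Stream'.Seq ℕ :=
  ⟨fun k => (nthSome X k).bind fun i => X i, by
    intro n h
    have hn : nthSome X n = none := by
      cases hh : nthSome X n with
      | none => rfl
      | some i =>
        exfalso
        have h1 := nthSome_isSome X n i hh
        replace h : (nthSome X n).bind (fun i => X i) = none := h
        rw [hh, Option.bind_some] at h
        rw [h] at h1
        simp at h1
    show (nthSome X (n + 1)).bind _ = none
    rw [nthSome_succ_none hn, Option.bind_none]⟩

/-- The natural inclusion `ω^ω ⊆ ω^{≤ω}`. -/
def ofBaire (X : Baire) : Stream'.Seq ℕ :=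
  ⟨fun n => some (X n), by intro n h; simp at h⟩

/-- The natural inclusion `ω^{<ω} ⊆ ω^{≤ω}`. -/
def ofList (σ : List ℕ) : Stream'.Seq ℕ := Stream'.Seq.ofList σ

/-- The initial segment (prefix) relation on `ω^{≤ω}`. -/
def SeqPrefix (σ τ : Stream'.Seq ℕ) : Prop :=
  ∀ n a, σ.get? n = some a → τ.get? n = some a

/-- A `Q`-valued function on `ω̂^ω` is conciliatory if its value depends only on the
pass-deleted input: `X^p = Y^p → A(X) = A(Y)`. -/
def ConciliatoryQ {Q : Type*} (A : HatBaire → Q) : Prop :=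
  ∀ X Y, strip X = strip Y → A X = A Y

/-- `Ψ : ω̂^ω → ω̂^ω` is conciliatory if `X^p = Y^p` implies `Ψ(X)^p = Ψ(Y)^p`. -/
def ConciliatoryF (Ψ : HatBaire → HatBaire) : Prop :=
  ∀ X Y, strip X = strip Y → strip (Ψ X) = strip (Ψ Y)

/-- `Ψ ≡_p Φ`: `Ψ(X)^p = Φ(X)^p` for all `X`. -/
def PEquiv (Ψ Φ : HatBaire → HatBaire) : Prop := ∀ X, strip (Ψ X) = strip (Φ X)

/-- `Σ⁰_ξ`-measurability for self-maps of `ω̂^ω`. -/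
def SigmaMeasurableH (ξ : Ordinal.{0}) (Ψ : HatBaire → HatBaire) : Prop :=
  ∀ σ : List Hat, SigmaZero HatBaire ξ (Ψ ⁻¹' cylH σ)

/-- A conciliatory `U` is `Σ⁰_ξ`-universal if it is `Σ⁰_ξ`-measurable and every
`Σ⁰_ξ`-measurable conciliatory `G` satisfies `G ≡_p U ∘ θ` for some continuous `θ`. -/
def SigmaUniversal (ξ : Ordinal.{0}) (U : HatBaire → HatBaire) : Prop :=
  SigmaMeasurableH ξ U ∧
    ∀ G : HatBaire → HatBaire, ConciliatoryF G → SigmaMeasurableH ξ G →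
      ∃ θ : HatBaire → HatBaire, Continuous θ ∧ PEquiv G (U ∘ θ)

/-- `Ψ` is initializable if for every `τ ∈ ω̂^{<ω}` there is a continuous `θ_τ : ω̂^ω → [τ]`
with `Ψ ≡_p Ψ ∘ θ_τ`. -/
def InitializableH (Ψ : HatBaire → HatBaire) : Prop :=
  ∀ τ : List Hat, ∃ θ : HatBaire → HatBaire,
    Continuous θ ∧ (∀ X, θ X ∈ cylH τ) ∧ PEquiv Ψ (Ψ ∘ θ)

/-! ### The mind-change coding -/

/-- `ω̂^{≤ω}`: finite or infinite sequences over `ω̂` (the value `none` of the outer `Option`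
means "beyond the length of the sequence"). -/
abbrev HatSeq : Type := {Y : ℕ → Option Hat // ∀ n, Y n = none → Y (n + 1) = none}

/-- The pass-deleted sequence `Y^p ∈ ω^{≤ω}` of `Y ∈ ω̂^{≤ω}`. -/
def stripHS (Y : HatSeq) : Stream'.Seq ℕ := strip fun n => (Y.1 n).join

/-- The mind-change coding `Y → Z` for `Y ∈ ω̂^{≤ω}` of length `ℓ` and `Z ∈ ω̂^ω`:
`(Y→Z)(n) = 2·Y(n)` if `n < ℓ` and `Y(n) ≠ pass`; `pass` if `n < ℓ` and `Y(n) = pass`;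
`2·Z(0)+1` if `n = ℓ`; and `Z(n−ℓ)` if `n > ℓ`.  When `Y` is infinite or `Z^p` is empty,
`Y→Z` is `Y` with each non-pass entry doubled (padded with passes). -/
def arrowSeq (Y : HatSeq) (Z : HatBaire) : HatBaire := fun n =>
  match Y.1 n with
  | some (some k) => some (2 * k)
  | some none => none
  | none =>
    if ∀ m, Z m = none then none
    else if n = sInf {m | Y.1 m = none} then (Z 0).map fun z => 2 * z + 1
    else Z (n - sInf {m | Y.1 m = none})

/-- The canonical `π₀`: the part of `X` before the first mind change, with all entries halved
(and passes from the first mind change on). -/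
def pi0 (X : HatBaire) : HatBaire := fun n =>
  if ∃ m ≤ n, ∃ k, X m = some (2 * k + 1) then none
  else (X n).map fun k => k / 2

/-- The canonical `π₁`: the decoded part of `X` from the first mind change on (and all passes
if no mind change ever occurs). -/
def pi1 (X : HatBaire) : HatBaire := fun n =>
  if ∃ m, ∃ k, X m = some (2 * k + 1) then
    if n = 0 then (X (sInf {m | ∃ k, X m = some (2 * k + 1)})).map fun k => k / 2
    else X (sInf {m | ∃ k, X m = some (2 * k + 1)} + n)
  else none

/-- The mind-change operation on functions:
`(A→B)(X) = A(π₀ X)` if `π₁(X)^p` is empty, and `B(π₁ X)` otherwise. -/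
def mcArrow {Q : Type*} (A B : HatBaire → Q) : HatBaire → Q := fun X =>
  if ∀ n, pi1 X n = none then A (pi0 X) else B (pi1 X)

/-- The `Σ_T`-complete functions `Ω_T`, relative to a fixed `Σ⁰₂`-universal initializable
conciliatory function `𝒰`:
* `Ω_{⟨q⟩}` is the constant function with value `q` (equivalently `Ω_q ∘ 𝒰`);
* `Ω_{⟨S⟩} = Ω_S ∘ 𝒰`;
* `Ω_{⟨S⟩→F} = Ω_{⟨S⟩} → Ω_F`: the value is `Ω_{⟨S⟩}(π₀ X)` if no mind change occurs in `X`,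
  and `Ω_F(π₁ X)` otherwise (where `Ω_F(n⌢X') = Ω_{F_n}(X')`);
* `Ω_{⊔_n T_n}(n⌢X) = Ω_{T_n}(X)`. -/
def Omega {Q : Type u} (U : HatBaire → HatBaire) : Term Q → HatBaire → Q
  | .const q => fun _ => q
  | .jump _ T => fun X => Omega U T (U X)
  | .node B F => fun X =>
      if ∀ n, pi1 X n = none then Omega U B (pi0 X)
      else Omega U (F ((pi1 X 0).getD 0)) fun n => pi1 X (n + 1)
  | .sup F => fun X => Omega U (F ((X 0).getD 0)) fun n => X (n + 1)

/-- `Ω_T` as a function on `ω × ω̂^ω`: for a `⊔`-type term `⊔_n T_n` this is the function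
`(n, X) ↦ Ω_{T_n}(X)`; a tree is treated as a forest with a single (repeated) component,
i.e. `Ω_T` is composed with the (Wadge-irrelevant) projection. -/
def OmegaC {Q : Type u} (U : HatBaire → HatBaire) (T : Term Q) : ℕ × HatBaire → Q :=
  match T with
  | .sup F => fun p => Omega U (F p.1) p.2
  | t => fun p => Omega U t p.2

/-!
The universal function reads its input `Z` only through `Z^p`, parsed as a stream of tokens
`(key, code)`: the first token with key `m` fixes coordinate `m` of a decoded point, so every
event "coordinate `m` is `c`" is open in `Z`. Each block of the decoded point is a slot proposing
a value `v` for a position `k` of the output, at some level `β < ξ`; the slot is verified when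
its block lies in the canonical `Π⁰_β`-complete set, a `Δ⁰_ξ` condition. The output is assembled
from the verified slots position by position, so the function is `Σ⁰_ξ`-measurable.

If `G` is `Σ⁰_ξ`-measurable, each event "the `k`-th entry of `G(X)^p` is `v`" is a countable union
of `Π⁰_β` sets with `β < ξ`, each reducible to a complete set; putting these reductions into
distinct slots reduces `G` to the universal function. A stem `τ` fixes only finitely many
coordinates of the decoded point, and the slots meeting them can be made unverifiable, which
gives initializability.
-/

open scoped Cardinal

/-! ### Pass deletion -/

/-- The number of non-`pass` entries among `Z 0, …, Z (i - 1)`. -/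
def numSome (Z : HatBaire) : ℕ → ℕ
  | 0 => 0
  | i + 1 => numSome Z i + (Z i).isSome.toNat

theorem numSome_mono (Z : HatBaire) : Monotone (numSome Z) :=
  monotone_nat_of_le_succ fun i => by simp only [numSome]; omega

theorem numSome_lt_of_isSome {Z : HatBaire} {i j : ℕ} (hij : i < j) (hi : (Z i).isSome) :
    numSome Z i < numSome Z j :=
  calc numSome Z i < numSome Z (i + 1) := by simp [numSome, hi]
    _ ≤ numSome Z j := numSome_mono Z hij

theorem numSome_eq_of_forall_not_isSome {Z : HatBaire} {i j : ℕ} (hij : i ≤ j)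
    (h : ∀ l, i ≤ l → l < j → ¬ (Z l).isSome) : numSome Z j = numSome Z i := by
  induction j, hij using Nat.le_induction with
  | base => rfl
  | succ j hij ih =>
    simp [numSome, h j hij j.lt_succ_self, ih fun l hl hlj => h l hl (by omega)]

theorem exists_numSome_eq {Z : HatBaire} {i k : ℕ} (h : k < numSome Z i) :
    ∃ j < i, (Z j).isSome ∧ numSome Z j = k := by
  induction i with
  | zero => simp [numSome] at h
  | succ i ih =>
    by_cases hk : k < numSome Z i
    · obtain ⟨j, hji, hj⟩ := ih hk
      exact ⟨j, by omega, hj⟩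
    · by_cases hi : (Z i).isSome
      · simp only [numSome, hi, Bool.toNat_true] at h
        exact ⟨i, i.lt_succ_self, hi, by omega⟩
      · simp [numSome, hi] at h
        omega

theorem numSome_eq_zero_iff {Z : HatBaire} {i : ℕ} :
    numSome Z i = 0 ↔ ∀ l < i, ¬ (Z l).isSome :=
  ⟨fun h _ hl hsome => (numSome_lt_of_isSome hl hsome).ne_bot h, fun h =>
    numSome_eq_of_forall_not_isSome (Nat.zero_le i) fun l _ hl => h l hl⟩

theorem numSome_eq_succ_iff {Z : HatBaire} {i₀ i : ℕ} (hi₀ : (Z i₀).isSome) :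
    numSome Z i = numSome Z i₀ + 1 ↔ i₀ < i ∧ ∀ l, i₀ < l → l < i → ¬ (Z l).isSome := by
  constructor
  · intro h
    have hi₀i : i₀ < i := by
      by_contra! hle
      have := numSome_mono Z hle
      omega
    refine ⟨hi₀i, fun l hi₀l hli hl => ?_⟩
    have := numSome_lt_of_isSome hi₀l hi₀
    have := numSome_lt_of_isSome hli hl
    omega
  · rintro ⟨hi₀i, hgap⟩
    rw [numSome_eq_of_forall_not_isSome hi₀i hgap]
    simp [numSome, hi₀]

theorem nthSome_eq_some_iff {Z : HatBaire} {k i : ℕ} :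
    nthSome Z k = some i ↔ (Z i).isSome ∧ numSome Z i = k := by
  induction k generalizing i with
  | zero =>
    by_cases hex : ∃ j, (Z j).isSome
    · simp only [nthSome, hex, dite_true, Option.some.injEq, Nat.find_eq_iff, numSome_eq_zero_iff]
    · simp only [nthSome, hex, dite_false, reduceCtorEq, false_iff, not_and]
      exact fun hi => absurd ⟨i, hi⟩ hex
  | succ k ih =>
    rcases hk : nthSome Z k with _ | i₀
    · simp only [nthSome, hk, reduceCtorEq, false_iff, not_and]
      intro hi hik
      obtain ⟨j, -, hj⟩ := exists_numSome_eq (show k < numSome Z i by omega)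
      exact absurd (ih.mpr hj) (by simp [hk])
    obtain ⟨hi₀, rfl⟩ := ih.mp hk
    by_cases hex : ∃ j, i₀ < j ∧ (Z j).isSome
    · simp only [nthSome, hk, hex, dite_true, Option.some.injEq, Nat.find_eq_iff]
      rw [numSome_eq_succ_iff hi₀]
      constructor
      · rintro ⟨⟨hi₀i, hi⟩, hmin⟩
        exact ⟨hi, hi₀i, fun l hl hli hsome => hmin l hli ⟨hl, hsome⟩⟩
      · rintro ⟨hi, hi₀i, hgap⟩
        exact ⟨⟨hi₀i, hi⟩, fun l hli ⟨hl, hsome⟩ => hgap l hl hli hsome⟩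
    · simp only [nthSome, hk, hex, dite_false, reduceCtorEq, false_iff, not_and]
      rw [numSome_eq_succ_iff hi₀]
      exact fun hi h => hex ⟨i, h.1, hi⟩

theorem strip_get?_eq_some_iff {Z : HatBaire} {k v : ℕ} :
    (strip Z).get? k = some v ↔ ∃ i, Z i = some v ∧ numSome Z i = k := by
  change (nthSome Z k).bind Z = some v ↔ _
  rw [Option.bind_eq_some_iff]
  refine exists_congr fun i => ?_
  rw [nthSome_eq_some_iff]
  constructor
  · rintro ⟨⟨-, hk⟩, hv⟩
    exact ⟨hv, hk⟩
  · rintro ⟨hv, hk⟩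
    exact ⟨⟨by simp [hv], hk⟩, hv⟩

def consH (a : Hat) (W : HatBaire) : HatBaire
  | 0 => a
  | i + 1 => W i

def prependH : List Hat → HatBaire → HatBaire
  | [], W => W
  | a :: l, W => consH a (prependH l W)

theorem numSome_consH (a : Hat) (W : HatBaire) (i : ℕ) :
    numSome (consH a W) (i + 1) = a.isSome.toNat + numSome W i := by
  induction i with
  | zero => simp [numSome, consH]
  | succ i ih =>
    rw [numSome, ih, numSome, add_assoc]
    rfl

theorem strip_consH_none (W : HatBaire) : strip (consH none W) = strip W := by
  refine Stream'.Seq.ext fun k => Option.ext fun v => ?_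
  simp only [strip_get?_eq_some_iff]
  constructor
  · rintro ⟨_ | i, hi, hk⟩
    · simp [consH] at hi
    · exact ⟨i, hi, by simpa [numSome_consH] using hk⟩
  · rintro ⟨i, hi, hk⟩
    exact ⟨i + 1, hi, by simpa [numSome_consH] using hk⟩

theorem strip_consH_some (x : ℕ) (W : HatBaire) :
    strip (consH (some x) W) = Stream'.Seq.cons x (strip W) := by
  refine Stream'.Seq.ext fun k => Option.ext fun v => ?_
  rcases k with _ | k
  · rw [Stream'.Seq.get?_cons_zero, strip_get?_eq_some_iff]
    constructor
    · rintro ⟨_ | i, hi, hk⟩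
      · simpa [consH] using hi
      · simp [numSome_consH] at hk
    · rintro ⟨⟩
      exact ⟨0, rfl, rfl⟩
  · rw [Stream'.Seq.get?_cons_succ, strip_get?_eq_some_iff, strip_get?_eq_some_iff]
    constructor
    · rintro ⟨_ | i, hi, hk⟩
      · simp [numSome] at hk
      · exact ⟨i, hi, by simp [numSome_consH] at hk; omega⟩
    · rintro ⟨i, hi, hk⟩
      exact ⟨i + 1, hi, by simp [numSome_consH, hk, add_comm]⟩

theorem strip_prependH (l : List Hat) (W : HatBaire) :
    strip (prependH l W) = (Stream'.Seq.ofList (l.filterMap id)).append (strip W) := by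
  induction l with
  | nil => simp [prependH]
  | cons a l ih =>
    cases a with
    | none => simpa [prependH, strip_consH_none] using ih
    | some x =>
      simp [prependH, strip_consH_some, ih, Stream'.Seq.ofList_cons, Stream'.Seq.cons_append]

theorem strip_some (w : Stream' ℕ) :
    strip (fun i => some (w.get i)) = Stream'.Seq.ofStream w := by
  have hnum (i : ℕ) : numSome (fun i => some (w.get i)) i = i := by
    induction i with
    | zero => rfl
    | succ i ih => simp [numSome, ih]
  refine Stream'.Seq.ext fun k => Option.ext fun v => ?_
  simp only [strip_get?_eq_some_iff, hnum]
  exact ⟨fun ⟨i, hi, hk⟩ => hk ▸ hi, fun h => ⟨k, h, rfl⟩⟩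

theorem prependH_mem_cylH (l : List Hat) (W : HatBaire) : prependH l W ∈ cylH l := by
  induction l with
  | nil => exact fun i => i.elim0
  | cons a l ih =>
    rintro ⟨_ | i, hi⟩
    · rfl
    · exact ih ⟨i, by simpa using hi⟩

theorem prependH_append (l l' : List Hat) (W : HatBaire) :
    prependH (l ++ l') W = prependH l (prependH l' W) := by
  induction l with
  | nil => rfl
  | cons a l ih => simp [prependH, ih]

theorem continuous_prependH (l : List Hat) : Continuous (prependH l) := by
  induction l with
  | nil => exact continuous_id
  | cons a l ih =>
    refine continuous_pi fun n => ?_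
    rcases n with _ | n
    · exact continuous_const
    · exact (continuous_apply n).comp ih

theorem get_append_stream_of_lt {α : Type*} {l : List α} {i : ℕ} (h : i < l.length)
    (s : Stream' α) : (l ++ₛ s).get i = l[i] := by
  induction l generalizing i with
  | nil => simp at h
  | cons a l ih =>
    rcases i with _ | i
    · rfl
    · exact ih (by simpa using h)

theorem get_append_stream_length_add {α : Type*} (l : List α) (s : Stream' α) (n : ℕ) :
    (l ++ₛ s).get (l.length + n) = s.get n := by
  rw [← Stream'.get_drop, Stream'.drop_append_stream]

/-! ### Borel classes -/

section BorelClasses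

variable {X : Type*} [TopologicalSpace X] {ξ γ : Ordinal.{0}} {s t : Set X}

theorem SigmaZero.one_le (h : SigmaZero X ξ s) : 1 ≤ ξ := by
  cases h with
  | of_isOpen => exact le_rfl
  | iUnion hξ => exact hξ.le

theorem SigmaZero.isOpen (h : SigmaZero X 1 s) : IsOpen s := by
  cases h with
  | of_isOpen h => exact h
  | iUnion hξ => exact absurd hξ (lt_irrefl 1)

theorem PiZero.sigmaZero_of_lt (h : PiZero X γ s) (hγξ : γ < ξ) : SigmaZero X ξ s := by
  rw [← Set.iUnion_const (ι := ℕ) s]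
  exact .iUnion (h.one_le.trans_lt hγξ) (fun _ => s) (fun _ => γ) (fun _ => hγξ) fun _ => h

theorem SigmaZero.exists_eq_iUnion (h : SigmaZero X ξ s) (hξ : 1 < ξ) :
    ∃ (f : ℕ → Set X) (β : ℕ → Ordinal.{0}),
      (∀ n, β n < ξ ∧ PiZero X (β n) (f n)) ∧ s = ⋃ n, f n := by
  cases h with
  | of_isOpen => exact absurd hξ (lt_irrefl 1)
  | iUnion _ f β hβ hf => exact ⟨f, β, fun n => ⟨hβ n, hf n⟩, rfl⟩

theorem sigmaZero_empty (hξ : 1 ≤ ξ) : SigmaZero X ξ ∅ := by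
  rcases hξ.eq_or_lt with rfl | hξ
  · exact .of_isOpen isOpen_empty
  · exact PiZero.sigmaZero_of_lt (.of_isOpen (by simp)) hξ

theorem SigmaZero.iUnion_nat (hξ : 1 ≤ ξ) {f : ℕ → Set X} (h : ∀ n, SigmaZero X ξ (f n)) :
    SigmaZero X ξ (⋃ n, f n) := by
  rcases hξ.eq_or_lt with rfl | hξ
  · exact .of_isOpen (isOpen_iUnion fun n => (h n).isOpen)
  choose g β hg hfg using fun n => (h n).exists_eq_iUnion hξ
  simp_rw [hfg, ← Set.iUnion_unpair]
  exact .iUnion hξ _ _ (fun t => (hg _ _).1) fun t => (hg _ _).2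

theorem SigmaZero.iUnion_of_countable {ι : Type*} [Countable ι] (hξ : 1 ≤ ξ)
    {f : ι → Set X} (h : ∀ i, SigmaZero X ξ (f i)) : SigmaZero X ξ (⋃ i, f i) := by
  cases isEmpty_or_nonempty ι
  · simpa using sigmaZero_empty hξ
  · obtain ⟨e, he⟩ := exists_surjective_nat ι
    rw [← he.iUnion_comp]
    exact .iUnion_nat hξ fun n => h (e n)

theorem SigmaZero.union (hs : SigmaZero X ξ s) (ht : SigmaZero X ξ t) :
    SigmaZero X ξ (s ∪ t) := by
  rw [Set.union_eq_iUnion]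
  exact .iUnion_of_countable hs.one_le fun b => by cases b <;> assumption

theorem DeltaZero.compl (h : DeltaZero X ξ s) : DeltaZero X ξ sᶜ :=
  ⟨h.2, by simpa [PiZero] using h.1⟩

variable [PerfectlyNormalSpace X]

theorem sigmaZero_of_isOpen (hs : IsOpen s) (hξ : 1 ≤ ξ) : SigmaZero X ξ s := by
  rcases hξ.eq_or_lt with rfl | hξ
  · exact .of_isOpen hs
  obtain ⟨U, hU, hsU⟩ := isGδ_iff_eq_iInter_nat.mp hs.isClosed_compl.isGδ
  rw [← compl_compl s, hsU, Set.compl_iInter]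
  exact .iUnion hξ _ (fun _ => 1) (fun _ => hξ) fun n => .of_isOpen (by simpa using hU n)

theorem SigmaZero.mono (h : SigmaZero X γ s) (hγξ : γ ≤ ξ) : SigmaZero X ξ s := by
  rcases hγξ.eq_or_lt with rfl | hγξ
  · exact h
  cases h with
  | of_isOpen h => exact sigmaZero_of_isOpen h hγξ.le
  | iUnion hγ f β hβ hf => exact .iUnion (hγ.trans hγξ) f β (fun n => (hβ n).trans hγξ) hf

theorem PiZero.mono (h : PiZero X γ s) (hγξ : γ ≤ ξ) : PiZero X ξ s :=
  SigmaZero.mono h hγξ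

theorem SigmaZero.inter (hs : SigmaZero X ξ s) (ht : SigmaZero X ξ t) :
    SigmaZero X ξ (s ∩ t) := by
  rcases hs.one_le.eq_or_lt with rfl | hξ
  · exact .of_isOpen (hs.isOpen.inter ht.isOpen)
  obtain ⟨f, β, hf, rfl⟩ := hs.exists_eq_iUnion hξ
  obtain ⟨g, β', hg, rfl⟩ := ht.exists_eq_iUnion hξ
  rw [Set.iUnion_inter_iUnion, ← Set.iUnion_unpair]
  refine .iUnion hξ _ (fun t => max (β (Nat.unpair t).1) (β' (Nat.unpair t).2))
    (fun t => max_lt (hf _).1 (hg _).1) fun t => ?_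
  rw [Set.compl_inter]
  exact ((hf _).2.mono (le_max_left _ _)).union ((hg _).2.mono (le_max_right _ _))

theorem PiZero.deltaZero_of_lt (h : PiZero X γ s) (hγξ : γ < ξ) : DeltaZero X ξ s :=
  ⟨h.sigmaZero_of_lt hγξ, h.mono hγξ.le⟩

theorem DeltaZero.inter (hs : DeltaZero X ξ s) (ht : DeltaZero X ξ t) :
    DeltaZero X ξ (s ∩ t) :=
  ⟨hs.1.inter ht.1, by simpa [PiZero, Set.compl_inter] using hs.2.union ht.2⟩

theorem DeltaZero.union (hs : DeltaZero X ξ s) (ht : DeltaZero X ξ t) :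
    DeltaZero X ξ (s ∪ t) := by
  simpa only [Set.compl_inter, compl_compl] using (hs.compl.inter ht.compl).compl

theorem deltaZero_of_isClopen (hs : IsClopen s) (hξ : 1 ≤ ξ) : DeltaZero X ξ s :=
  ⟨sigmaZero_of_isOpen hs.isOpen hξ, sigmaZero_of_isOpen hs.compl.isOpen hξ⟩

theorem deltaZero_setOf_const (hξ : 1 ≤ ξ) (p : Prop) : DeltaZero X ξ {_x : X | p} := by
  by_cases hp : p
  · simpa [hp] using deltaZero_of_isClopen (X := X) isClopen_univ hξ
  · simpa [hp] using deltaZero_of_isClopen (X := X) isClopen_empty hξ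

end BorelClasses

theorem isClopen_cylH (σ : List Hat) : IsClopen (cylH σ) := by
  have : cylH σ = ⋂ i : Fin σ.length, (fun Z : HatBaire => Z i) ⁻¹' {σ.get i} := by
    ext Z; simp [cylH]
  rw [this]
  exact isClopen_iInter_of_finite fun i => (isClopen_discrete _).preimage (continuous_apply _)

theorem eq_iUnion_cylH_of_isOpen {O : Set HatBaire} (hO : IsOpen O) :
    O = ⋃ σ : {σ : List Hat // cylH σ ⊆ O}, cylH σ.1 := by
  refine subset_antisymm (fun Z hZ => ?_) (Set.iUnion_subset fun σ => σ.2)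
  obtain ⟨-, ⟨Y, n, rfl⟩, hZY, hYO⟩ :=
    (PiNat.isTopologicalBasis_cylinders fun _ => Hat).exists_subset_of_mem_open hZ hO
  rw [← PiNat.mem_cylinder_iff_eq.mp hZY] at hYO
  have hcyl : cylH (List.ofFn fun i : Fin n => Z i) = PiNat.cylinder Z n := by
    ext W; simp [cylH, PiNat.cylinder, Fin.forall_iff]
  exact Set.mem_iUnion.mpr ⟨⟨_, hcyl ▸ hYO⟩, by rw [hcyl]; exact PiNat.self_mem_cylinder Z n⟩

theorem SigmaMeasurableH.sigmaZero_preimage {ξ : Ordinal.{0}} {G : HatBaire → HatBaire}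
    (hG : SigmaMeasurableH ξ G) (hξ : 1 ≤ ξ) {O : Set HatBaire} (hO : IsOpen O) :
    SigmaZero HatBaire ξ (G ⁻¹' O) := by
  rw [eq_iUnion_cylH_of_isOpen hO, Set.preimage_iUnion]
  exact .iUnion_of_countable hξ fun σ => hG σ.1

theorem continuous_numSome (i : ℕ) : Continuous fun Z : HatBaire => numSome Z i := by
  induction i with
  | zero => exact continuous_const
  | succ i ih =>
    exact ih.add ((continuous_of_discreteTopology (f := fun a : Hat => a.isSome.toNat)).comp
      (continuous_apply i))

theorem isOpen_setOf_strip_get?_eq_some (k v : ℕ) :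
    IsOpen {Z : HatBaire | (strip Z).get? k = some v} := by
  simp only [strip_get?_eq_some_iff, Set.ofPred_exists]
  refine isOpen_iUnion fun i => IsOpen.inter ?_ ?_
  · exact (continuous_apply (A := fun _ : ℕ => Hat) i).isOpen_preimage {some v} (isOpen_discrete _)
  · exact (continuous_numSome i).isOpen_preimage {k} (isOpen_discrete _)

theorem exists_isClopen_iUnion_eq {O : Set HatBaire} (hO : IsOpen O) :
    ∃ C : ℕ → Set HatBaire, (∀ n, IsClopen (C n)) ∧ O = ⋃ n, C n := by
  obtain ⟨e, he⟩ := exists_surjective_nat (List Hat)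
  refine ⟨fun n => if cylH (e n) ⊆ O then cylH (e n) else ∅, fun n => ?_, ?_⟩
  · dsimp only
    split_ifs
    exacts [isClopen_cylH _, isClopen_empty]
  · refine subset_antisymm ?_ (Set.iUnion_subset fun n => ?_)
    · refine (eq_iUnion_cylH_of_isOpen hO).trans_subset (Set.iUnion_subset fun σ => ?_)
      obtain ⟨n, hn⟩ := he σ.1
      exact Set.subset_iUnion_of_subset n (by simp [hn, σ.2])
    · split_ifs with h
      exacts [h, Set.empty_subset O]

theorem continuous_ite_mem {X Y : Type*} [TopologicalSpace X] [TopologicalSpace Y] {C : Set X}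
    (hC : IsClopen C) (a b : Y) : Continuous fun x => if x ∈ C then a else b :=
  continuous_const.if (by simp [hC.frontier_eq]) continuous_const

/-! ### Complete sets -/

theorem card_one_add_omega0_opow_le {α : Ordinal.{0}} (hα : α.card ≤ ℵ₀) :
    (1 + Ordinal.omega0 ^ α).card ≤ ℵ₀ := by
  rw [Ordinal.card_add, Ordinal.card_one]
  refine Cardinal.add_le_aleph0.mpr ⟨Cardinal.one_le_aleph0, ?_⟩
  refine (Ordinal.card_opow_le_of_omega0_le_left le_rfl α).trans ?_
  rw [Ordinal.card_omega0]
  exact max_le le_rfl hα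

theorem two_le_one_add_omega0_opow (α : Ordinal.{0}) : 2 ≤ 1 + Ordinal.omega0 ^ α := by
  rw [← one_add_one_eq_two]
  exact add_le_add_right (Order.one_le_iff_pos.mpr (Ordinal.opow_pos α Ordinal.omega0_pos)) 1

theorem card_le_aleph0_of_lt {β γ : Ordinal.{0}} (h : β < γ) (hc : γ.card ≤ ℵ₀) :
    β.card ≤ ℵ₀ :=
  (Ordinal.card_le_card h.le).trans hc

theorem two_le_of_one_lt {γ : Ordinal.{0}} (h : 1 < γ) : 2 ≤ γ := by
  simpa [one_add_one_eq_two] using Order.add_one_le_of_lt h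

theorem eq_one_or_two_le {γ : Ordinal.{0}} (h : 1 ≤ γ) : γ = 1 ∨ 2 ≤ γ :=
  h.eq_or_lt.imp Eq.symm two_le_of_one_lt

theorem exists_levelSeq {γ : Ordinal.{0}} (hγ : 2 ≤ γ) (hc : γ.card ≤ ℵ₀) :
    ∃ e : ℕ → Ordinal.{0}, (∀ n, 1 ≤ e n ∧ e n < γ) ∧
      ∀ β, 1 ≤ β → β < γ → ∃ a, ∀ b, e (Nat.pair a b) = β := by
  have hIio : (Set.Iio γ).Countable := by
    rw [← Set.countable_coe_iff, ← Cardinal.mk_le_aleph0_iff, Cardinal.mk_Iio_ordinal,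
      Cardinal.lift_le_aleph0]
    exact hc
  have hne : (Set.Ico 1 γ).Nonempty :=
    ⟨1, le_rfl, one_lt_two.trans_le hγ⟩
  obtain ⟨f, hf⟩ := (hIio.mono fun _ h => h.2).exists_eq_range hne
  refine ⟨fun n => f (Nat.unpair n).1, fun n => ?_, fun β h1 hβ => ?_⟩
  · have : f (Nat.unpair n).1 ∈ Set.Ico 1 γ := hf ▸ Set.mem_range_self _
    exact this
  · obtain ⟨a, rfl⟩ : β ∈ Set.range f := hf ▸ ⟨h1, hβ⟩
    exact ⟨a, fun b => by simp⟩

/-- An enumeration of `[1, γ)` in which every level occurs along a whole column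
`b ↦ Nat.pair a b` (a junk constant unless `2 ≤ γ` is countable). -/
def levelSeq (γ : Ordinal.{0}) : ℕ → Ordinal.{0} :=
  if h : 2 ≤ γ ∧ γ.card ≤ ℵ₀ then Classical.choose (exists_levelSeq h.1 h.2) else fun _ => 1

theorem levelSeq_mem {γ : Ordinal.{0}} (hγ : 2 ≤ γ) (hc : γ.card ≤ ℵ₀) (n : ℕ) :
    1 ≤ levelSeq γ n ∧ levelSeq γ n < γ := by
  rw [levelSeq, dif_pos ⟨hγ, hc⟩]
  exact (Classical.choose_spec (exists_levelSeq hγ hc)).1 n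

theorem exists_levelSeq_pair_eq {γ β : Ordinal.{0}} (hγ : 2 ≤ γ) (hc : γ.card ≤ ℵ₀)
    (h1 : 1 ≤ β) (hβ : β < γ) : ∃ a, ∀ b, levelSeq γ (Nat.pair a b) = β := by
  rw [levelSeq, dif_pos ⟨hγ, hc⟩]
  exact (Classical.choose_spec (exists_levelSeq hγ hc)).2 β h1 hβ

def block (n : ℕ) (Y : HatBaire) : HatBaire := fun j => Y (Nat.pair n j)

def unblock (F : ℕ → HatBaire) : HatBaire := fun q => F (Nat.unpair q).1 (Nat.unpair q).2

@[simp]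
theorem block_unblock (F : ℕ → HatBaire) (n : ℕ) : block n (unblock F) = F n := by
  ext j; simp [block, unblock]

theorem continuous_unblock {X : Type*} [TopologicalSpace X] {F : ℕ → X → HatBaire}
    (hF : ∀ n, Continuous (F n)) : Continuous fun x => unblock fun n => F n x :=
  continuous_pi fun _ => (continuous_apply _).comp (hF _)

/-- The canonical `Π⁰_γ`-complete set; every `γ` other than a countable `γ ≥ 2` falls back to
the `Π⁰₁` case. -/
def piCompleteSet (γ : Ordinal.{0}) : Set HatBaire :=
  if 2 ≤ γ ∧ γ.card ≤ ℵ₀ then {Y | ∀ n, block n Y ∉ piCompleteSet (levelSeq γ n)}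
  else {Y | ∀ n, Y n ≠ some 0}
termination_by γ
decreasing_by rename_i h; exact (levelSeq_mem h.1 h.2 n).2

theorem piCompleteSet_one : piCompleteSet 1 = {Y | ∀ n, Y n ≠ some 0} := by
  rw [piCompleteSet, if_neg fun h => absurd h.1 (by simp)]

theorem piCompleteSet_of_two_le {γ : Ordinal.{0}} (hγ : 2 ≤ γ) (hc : γ.card ≤ ℵ₀) :
    piCompleteSet γ = {Y | ∀ n, block n Y ∉ piCompleteSet (levelSeq γ n)} := by
  rw [piCompleteSet, if_pos ⟨hγ, hc⟩]

theorem piZero_preimage_piCompleteSet {X : Type*} [TopologicalSpace X] {γ : Ordinal.{0}}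
    (h1 : 1 ≤ γ) (hc : γ.card ≤ ℵ₀) {f : X → HatBaire}
    (hf : ∀ p c, IsOpen {x | f x p = some c}) : PiZero X γ (f ⁻¹' piCompleteSet γ) := by
  induction γ using WellFoundedLT.induction generalizing f with
  | _ γ ih =>
  rcases eq_one_or_two_le h1 with rfl | h2
  · have : (f ⁻¹' piCompleteSet 1)ᶜ = ⋃ n, {x | f x n = some 0} := by
      ext x; simp [piCompleteSet_one]
    rw [PiZero, this]
    exact .of_isOpen (isOpen_iUnion fun n => hf n 0)
  · have : (f ⁻¹' piCompleteSet γ)ᶜ = ⋃ n, (block n ∘ f) ⁻¹' piCompleteSet (levelSeq γ n) := by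
      ext x; simp [piCompleteSet_of_two_le h2 hc]
    rw [PiZero, this]
    refine .iUnion (one_lt_two.trans_le h2) _ _ (fun n => (levelSeq_mem h2 hc n).2) fun n => ?_
    have hlev := levelSeq_mem h2 hc n
    exact ih _ hlev.2 hlev.1 (card_le_aleph0_of_lt hlev.2 hc)
      fun p c => hf (Nat.pair n p) c

theorem exists_mem_piCompleteSet_and_exists_not_mem {γ : Ordinal.{0}} (h1 : 1 ≤ γ)
    (hc : γ.card ≤ ℵ₀) : (∃ Y, Y ∈ piCompleteSet γ) ∧ ∃ Y, Y ∉ piCompleteSet γ := by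
  induction γ using WellFoundedLT.induction with
  | _ γ ih =>
  rcases eq_one_or_two_le h1 with rfl | h2
  · simp only [piCompleteSet_one, Set.mem_ofPred_eq, not_forall, not_not]
    exact ⟨⟨fun _ => none, fun _ => by simp⟩, fun _ => some 0, 0, rfl⟩
  · have ih' (n : ℕ) := ih _ (levelSeq_mem h2 hc n).2 (levelSeq_mem h2 hc n).1
      (card_le_aleph0_of_lt (levelSeq_mem h2 hc n).2 hc)
    choose M hM using fun n => (ih' n).1
    choose N hN using fun n => (ih' n).2
    simp only [piCompleteSet_of_two_le h2 hc, Set.mem_ofPred_eq, not_forall, not_not]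
    exact ⟨⟨unblock N, fun n => by simpa using hN n⟩, unblock fun _ => M 0, 0, by simpa using hM 0⟩

theorem exists_forall_not_mem_piCompleteSet {γ : Ordinal.{0}} (h1 : 1 ≤ γ) (hc : γ.card ≤ ℵ₀)
    {P : Set ℕ} (hP : P.Finite) :
    ∃ Y : HatBaire, ∀ Y' : HatBaire, (∀ j ∉ P, Y' j = Y j) → Y' ∉ piCompleteSet γ := by
  rcases eq_one_or_two_le h1 with rfl | h2
  · obtain ⟨j, hj⟩ := hP.infinite_compl.nonempty
    refine ⟨fun _ => some 0, fun Y' hY' hmem => ?_⟩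
    rw [piCompleteSet_one] at hmem
    exact hmem j (hY' j hj)
  · obtain ⟨n, hn⟩ := (hP.image fun q => (Nat.unpair q).1).infinite_compl.nonempty
    have hlev := levelSeq_mem h2 hc n
    obtain ⟨M, hM⟩ := (exists_mem_piCompleteSet_and_exists_not_mem hlev.1
      (card_le_aleph0_of_lt hlev.2 hc)).1
    refine ⟨unblock fun _ => M, fun Y' hY' hmem => ?_⟩
    rw [piCompleteSet_of_two_le h2 hc] at hmem
    have hblock : block n Y' = M := by
      ext j
      rw [block, hY' _ fun hP => hn ⟨_, hP, by simp⟩]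
      simp [unblock]
    exact hmem n (hblock ▸ hM)

theorem SigmaZero.exists_reduction_compl_piCompleteSet {γ : Ordinal.{0}} {s : Set HatBaire}
    (h : SigmaZero HatBaire γ s) (hc : γ.card ≤ ℵ₀) :
    ∃ θ : HatBaire → HatBaire, Continuous θ ∧ ∀ X, X ∈ s ↔ θ X ∉ piCompleteSet γ := by
  induction h with
  | of_isOpen hO =>
    obtain ⟨C, hC, rfl⟩ := exists_isClopen_iUnion_eq hO
    refine ⟨fun X n => if X ∈ C n then some 0 else none,
      continuous_pi fun n => continuous_ite_mem (hC n) _ _, fun X => ?_⟩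
    simp [piCompleteSet_one]
  | @iUnion γ hγ f β hβ hf ih =>
    have h2 := two_le_of_one_lt hγ
    choose θ hθ hθs using fun n => ih n (card_le_aleph0_of_lt (hβ n) hc)
    choose a ha using fun n => exists_levelSeq_pair_eq h2 hc (hf n).one_le (hβ n)
    choose N hN using fun t => (exists_mem_piCompleteSet_and_exists_not_mem
      (levelSeq_mem h2 hc t).1 (card_le_aleph0_of_lt (levelSeq_mem h2 hc t).2 hc)).2
    -- block `⟨a n, n⟩` carries the reduction of `f n`, every other block is a non-member
    let B (t : ℕ) : HatBaire → HatBaire :=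
      if (Nat.unpair t).1 = a (Nat.unpair t).2 then θ (Nat.unpair t).2 else fun _ => N t
    have hB (t : ℕ) : Continuous (B t) := by
      dsimp only [B]; split_ifs
      exacts [hθ _, continuous_const]
    refine ⟨fun X => unblock fun t => B t X, continuous_unblock hB, fun X => ?_⟩
    simp only [piCompleteSet_of_two_le h2 hc, Set.mem_ofPred_eq, not_forall, not_not,
      Set.mem_iUnion, block_unblock]
    constructor
    · rintro ⟨n, hn⟩
      refine ⟨Nat.pair (a n) n, ?_⟩
      simp only [B, Nat.unpair_pair, if_true, ha]
      by_contra hX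
      exact (hθs n X).mpr hX hn
    · rintro ⟨t, ht⟩
      by_cases hat : (Nat.unpair t).1 = a (Nat.unpair t).2
      · refine ⟨(Nat.unpair t).2, by_contra fun hX => (hθs _ X).mp hX ?_⟩
        have ht' : t = Nat.pair (a (Nat.unpair t).2) (Nat.unpair t).2 := by
          rw [← hat, Nat.pair_unpair]
        simpa only [B, if_pos hat, ← ha _ (Nat.unpair t).2, ← ht'] using ht
      · exact absurd (by simpa [B, hat] using ht) (hN t)

/-! ### Token coding -/

/-- Token `i` of `w` is the pair `(w (2 * i), w (2 * i + 1))`: a key and a code. This says that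
token `i` is the first one with key `m` and that its code is `c`. -/
def IsFirstToken (w : ℕ → Option ℕ) (m c i : ℕ) : Prop :=
  w (2 * i) = some m ∧ w (2 * i + 1) = some c ∧ ∀ i' < i, ∃ d ≠ m, w (2 * i') = some d

theorem IsFirstToken.unique {w : ℕ → Option ℕ} {m c c' i i' : ℕ} (h : IsFirstToken w m c i)
    (h' : IsFirstToken w m c' i') : c = c' := by
  have key {i i' c c'} (h : IsFirstToken w m c i) (h' : IsFirstToken w m c' i') : ¬ i < i' :=
    fun hlt => by
      obtain ⟨d, hd, hw⟩ := h'.2.2 i hlt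
      exact hd (Option.some_injective _ (hw.symm.trans h.1))
  obtain rfl : i = i' := le_antisymm (not_lt.mp (key h' h)) (not_lt.mp (key h h'))
  exact Option.some_injective _ (h.2.1.symm.trans h'.2.1)

def decodeTokens (w : ℕ → Option ℕ) (m : ℕ) : Hat :=
  if h : ∃ p : ℕ × ℕ, IsFirstToken w m p.1 p.2 then Denumerable.ofNat Hat (Classical.choose h).1
  else none

theorem decodeTokens_eq {w : ℕ → Option ℕ} {m c i : ℕ} (h : IsFirstToken w m c i) :
    decodeTokens w m = Denumerable.ofNat Hat c := by
  have hex : ∃ p : ℕ × ℕ, IsFirstToken w m p.1 p.2 := ⟨(c, i), h⟩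
  rw [decodeTokens, dif_pos hex, (Classical.choose_spec hex).unique h]

theorem decodeTokens_eq_some_iff {w : ℕ → Option ℕ} {m x : ℕ} :
    decodeTokens w m = some x ↔ ∃ i, IsFirstToken w m (Encodable.encode (some x)) i := by
  constructor
  · intro h
    by_cases hex : ∃ p : ℕ × ℕ, IsFirstToken w m p.1 p.2
    · obtain ⟨⟨c, i⟩, hci⟩ := hex
      rw [decodeTokens_eq hci] at h
      exact ⟨i, by rwa [← h, Denumerable.encode_ofNat]⟩
    · simp [decodeTokens, hex] at h
  · rintro ⟨i, hi⟩
    rw [decodeTokens_eq hi, Denumerable.ofNat_encode]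

def decodePoint (Z : HatBaire) : HatBaire := decodeTokens fun k => (strip Z).get? k

theorem decodePoint_congr {Z Z' : HatBaire} (h : strip Z = strip Z') :
    decodePoint Z = decodePoint Z' := by
  rw [decodePoint, decodePoint, h]

theorem isOpen_setOf_decodePoint_eq_some (m x : ℕ) :
    IsOpen {Z : HatBaire | decodePoint Z m = some x} := by
  simp only [decodePoint, decodeTokens_eq_some_iff, IsFirstToken, Set.ofPred_exists,
    Set.ofPred_and]
  refine isOpen_iUnion fun i => (isOpen_setOf_strip_get?_eq_some _ _).inter
    ((isOpen_setOf_strip_get?_eq_some _ _).inter ?_)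
  have : {Z : HatBaire | ∀ i' < i, ∃ d ≠ m, (strip Z).get? (2 * i') = some d} =
      ⋂ i' ∈ Set.Iio i, ⋃ d ∈ {d | d ≠ m}, {Z | (strip Z).get? (2 * i') = some d} := by
    ext Z; simp
  rw [this]
  exact (Set.finite_Iio i).isOpen_biInter fun i' _ =>
    isOpen_biUnion fun d _ => isOpen_setOf_strip_get?_eq_some _ _

def encodeTokens (Y : HatBaire) : Stream' ℕ :=
  fun p => if p % 2 = 0 then p / 2 else Encodable.encode (Y (p / 2))

@[simp]
theorem encodeTokens_two_mul (Y : HatBaire) (j : ℕ) : (encodeTokens Y).get (2 * j) = j := by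
  simp [encodeTokens, Stream'.get]

@[simp]
theorem encodeTokens_two_mul_add_one (Y : HatBaire) (j : ℕ) :
    (encodeTokens Y).get (2 * j + 1) = Encodable.encode (Y j) := by
  simp [encodeTokens, Stream'.get, Nat.add_mod, Nat.add_div]

theorem continuous_encodeTokens (p : ℕ) : Continuous fun Y => (encodeTokens Y).get p := by
  obtain ⟨j, rfl | rfl⟩ := Nat.even_or_odd' p
  · simpa using continuous_const
  · simp only [encodeTokens_two_mul_add_one]
    exact (continuous_of_discreteTopology (f := fun a : Hat => Encodable.encode a)).comp
      (continuous_apply j)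

theorem isFirstToken_append_encodeTokens {l : List ℕ} {i₀ : ℕ} (hl : l.length = 2 * i₀)
    (Y : HatBaire) {m : ℕ} (hm : ∀ i, l[2 * i]? ≠ some m) :
    IsFirstToken (fun p => some ((l ++ₛ encodeTokens Y).get p)) m
      (Encodable.encode (Y m)) (i₀ + m) := by
  have hget (p : ℕ) : (l ++ₛ encodeTokens Y).get (l.length + p) = (encodeTokens Y).get p :=
    get_append_stream_length_add l _ p
  refine ⟨?_, ?_, fun i' hi' => ?_⟩
  · simpa [hl, mul_add] using hget (2 * m)
  · simpa [hl, mul_add, add_assoc] using hget (2 * m + 1)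
  · by_cases hi₀ : i' < i₀
    · have hlt : 2 * i' < l.length := by omega
      refine ⟨l[2 * i'], fun h => hm i' (by simp [hlt, h]), ?_⟩
      simp [get_append_stream_of_lt hlt]
    · obtain ⟨j, rfl⟩ : ∃ j, i' = i₀ + j := ⟨i' - i₀, by omega⟩
      refine ⟨j, by omega, ?_⟩
      simpa [hl, mul_add] using hget (2 * j)

theorem exists_filterMap_length_even (τ : List Hat) :
    ∃ ρ : List Hat, ∃ i₀, ((τ ++ ρ).filterMap id).length = 2 * i₀ := by
  obtain ⟨k, hk | hk⟩ := Nat.even_or_odd' (τ.filterMap id).length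
  · exact ⟨[], k, by simpa using hk⟩
  · refine ⟨[some 0], k + 1, ?_⟩
    rw [List.filterMap_append, List.length_append, hk]
    rfl

/-- The exceptional positions `P` are the keys of the tokens already present in the stem `τ`. -/
theorem exists_encoding_in_cylH (τ : List Hat) :
    ∃ (E : HatBaire → HatBaire) (P : Set ℕ), Continuous E ∧ (∀ Y, E Y ∈ cylH τ) ∧ P.Finite ∧
      ∀ Y, ∀ m ∉ P, decodePoint (E Y) m = Y m := by
  obtain ⟨ρ, i₀, hl⟩ := exists_filterMap_length_even τ
  set lf := (τ ++ ρ).filterMap id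
  refine ⟨fun Y => prependH (τ ++ ρ) fun p => some ((encodeTokens Y).get p),
    {m | ∃ i, lf[2 * i]? = some m}, ?_, fun Y => ?_, ?_, fun Y m hm => ?_⟩
  · exact (continuous_prependH _).comp (continuous_pi fun p =>
      continuous_of_discreteTopology.comp (continuous_encodeTokens p))
  · show prependH (τ ++ ρ) _ ∈ cylH τ
    rw [prependH_append]
    exact prependH_mem_cylH _ _
  · exact lf.finite_toSet.subset fun m ⟨i, h⟩ => List.mem_of_getElem? h
  · have hstrip : strip (prependH (τ ++ ρ) fun p => some ((encodeTokens Y).get p)) =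
        Stream'.Seq.ofStream (lf ++ₛ encodeTokens Y) := by
      rw [strip_prependH, strip_some, Stream'.Seq.ofStream_append]
    have hfirst := isFirstToken_append_encodeTokens hl Y (m := m) fun i h => hm ⟨i, h⟩
    rw [decodePoint, hstrip]
    exact (decodeTokens_eq hfirst).trans (Denumerable.ofNat_encode _)

/-! ### Runs of slots -/

/-- The slot `mkSlot k v m` proposes the value `v` for position `k` of the output; its level is
`levelSeq ξ m`. -/
def mkSlot (k v m : ℕ) : ℕ := Nat.pair k (Nat.pair v m)

def slotKey (s : ℕ) : ℕ := (Nat.unpair s).1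

def slotVal (s : ℕ) : ℕ := (Nat.unpair (Nat.unpair s).2).1

def slotLevel (ξ : Ordinal.{0}) (s : ℕ) : Ordinal.{0} := levelSeq ξ (Nat.unpair (Nat.unpair s).2).2

theorem slotLevel_mem {ξ : Ordinal.{0}} (hξ : 2 ≤ ξ) (hc : ξ.card ≤ ℵ₀) (s : ℕ) :
    1 ≤ slotLevel ξ s ∧ slotLevel ξ s < ξ :=
  levelSeq_mem hξ hc _

@[simp] theorem slotKey_mkSlot (k v m : ℕ) : slotKey (mkSlot k v m) = k := by
  simp [slotKey, mkSlot]

@[simp] theorem slotVal_mkSlot (k v m : ℕ) : slotVal (mkSlot k v m) = v := by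
  simp [slotVal, mkSlot]

@[simp] theorem slotLevel_mkSlot (ξ : Ordinal.{0}) (k v m : ℕ) :
    slotLevel ξ (mkSlot k v m) = levelSeq ξ m := by
  simp [slotLevel, mkSlot]

section Run

variable (V : ℕ → Prop)

/-- At time `t` the run examines slot `(Nat.unpair t).2`, so that every slot is examined
infinitely often; having output `n` values, it outputs the slot's value if `V` accepts the slot
and the slot proposes a value for position `n`. -/
def RunFires (t n : ℕ) : Prop := slotKey (Nat.unpair t).2 = n ∧ V (Nat.unpair t).2

def runCount : ℕ → ℕ
  | 0 => 0
  | t + 1 => if RunFires V t (runCount t) then runCount t + 1 else runCount t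

def run : HatBaire := fun t =>
  if RunFires V t (runCount V t) then some (slotVal (Nat.unpair t).2) else none

variable {V}

theorem runCount_succ_of_runFires {t : ℕ} (h : RunFires V t (runCount V t)) :
    runCount V (t + 1) = runCount V t + 1 := if_pos h

theorem runCount_succ_of_not_runFires {t : ℕ} (h : ¬ RunFires V t (runCount V t)) :
    runCount V (t + 1) = runCount V t := if_neg h

theorem runCount_succ_le (t : ℕ) : runCount V (t + 1) ≤ runCount V t + 1 := by
  by_cases h : RunFires V t (runCount V t)
  · rw [runCount_succ_of_runFires h]
  · rw [runCount_succ_of_not_runFires h]; omega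

theorem runCount_mono : Monotone (runCount V) := by
  refine monotone_nat_of_le_succ fun t => ?_
  by_cases h : RunFires V t (runCount V t)
  · rw [runCount_succ_of_runFires h]; omega
  · rw [runCount_succ_of_not_runFires h]

theorem numSome_run (t : ℕ) : numSome (run V) t = runCount V t := by
  induction t with
  | zero => rfl
  | succ t ih =>
    by_cases h : RunFires V t (runCount V t)
    · simp [numSome, ih, run, h, runCount_succ_of_runFires h]
    · simp [numSome, ih, run, h, runCount_succ_of_not_runFires h]

theorem exists_runFires_of_lt_runCount {k T : ℕ} (h : k < runCount V T) :
    ∃ t, RunFires V t k ∧ runCount V t = k := by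
  induction T with
  | zero => exact absurd h (Nat.not_lt_zero k)
  | succ T ih =>
    by_cases hk : k < runCount V T
    · exact ih hk
    · have hT : runCount V T = k := by have := runCount_succ_le (V := V) T; omega
      by_cases hf : RunFires V T (runCount V T)
      · exact ⟨T, hT ▸ hf, hT⟩
      · rw [runCount_succ_of_not_runFires hf] at h; omega

/-- The slot `s` is examined at time `Nat.pair T₀ s`. -/
theorem exists_lt_runCount {k T₀ s : ℕ} (hT₀ : k ≤ runCount V T₀) (hs : V s)
    (hsk : slotKey s = k) : ∃ T, k < runCount V T := by
  have hle : k ≤ runCount V (Nat.pair T₀ s) :=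
    hT₀.trans (runCount_mono (Nat.left_le_pair T₀ s))
  rcases hle.lt_or_eq with hlt | heq
  · exact ⟨_, hlt⟩
  · have hf : RunFires V (Nat.pair T₀ s) (runCount V (Nat.pair T₀ s)) := by
      simp [RunFires, hsk, heq, hs]
    exact ⟨_, by rw [runCount_succ_of_runFires hf]; omega⟩

theorem strip_run_eq {σ : Stream'.Seq ℕ}
    (h₁ : ∀ s, V s → σ.get? (slotKey s) = some (slotVal s))
    (h₂ : ∀ k v, σ.get? k = some v → ∃ s, V s ∧ slotKey s = k ∧ slotVal s = v) :
    strip (run V) = σ := by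
  have hreach (k : ℕ) : ∀ v, σ.get? k = some v → ∃ T, k < runCount V T := by
    induction k with
    | zero =>
      intro v hv
      obtain ⟨s, hs, hsk, -⟩ := h₂ _ v hv
      exact exists_lt_runCount (T₀ := 0) (Nat.zero_le _) hs hsk
    | succ k ih =>
      intro v hv
      obtain ⟨s, hs, hsk, -⟩ := h₂ _ v hv
      obtain ⟨w, hw⟩ := σ.ge_stable k.le_succ hv
      obtain ⟨T₀, hT₀⟩ := ih w hw
      exact exists_lt_runCount hT₀ hs hsk
  refine Stream'.Seq.ext fun k => Option.ext fun v => ?_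
  rw [strip_get?_eq_some_iff]
  constructor
  · rintro ⟨t, ht, hk⟩
    rw [numSome_run] at hk
    by_cases hf : RunFires V t (runCount V t)
    · simp only [run, if_pos hf, Option.some.injEq] at ht
      rw [← hk, ← hf.1, ← ht]
      exact h₁ _ hf.2
    · simp [run, hf] at ht
  · intro hv
    obtain ⟨T, hT⟩ := hreach k v hv
    obtain ⟨t, hf, hk⟩ := exists_runFires_of_lt_runCount hT
    refine ⟨t, ?_, by rw [numSome_run, hk]⟩
    have := h₁ _ hf.2
    rw [hf.1, hv, Option.some.injEq] at this
    simp [run, hk, hf, this]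

end Run

section DeltaCombinations

variable {X : Type*} [TopologicalSpace X] [PerfectlyNormalSpace X] {ξ : Ordinal.{0}}

theorem deltaZero_setOf_ite_eq {α : Type*} (hξ : 1 ≤ ξ) {p : X → Prop}
    (hp : DeltaZero X ξ {x | p x}) (a b c : α) :
    DeltaZero X ξ {x | (if p x then a else b) = c} := by
  have : {x | (if p x then a else b) = c} =
      {x | p x} ∩ {_x | a = c} ∪ {x | p x}ᶜ ∩ {_x | b = c} := by
    ext x; by_cases h : p x <;> simp [h]
  rw [this]
  exact (hp.inter (deltaZero_setOf_const hξ _)).union (hp.compl.inter (deltaZero_setOf_const hξ _))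

theorem deltaZero_setOf_apply_of_fibers (hξ : 1 ≤ ξ) {f : X → ℕ} {p : X → ℕ → Prop}
    (hf : ∀ n, DeltaZero X ξ {x | f x = n}) (hp : ∀ n, DeltaZero X ξ {x | p x n}) :
    DeltaZero X ξ {x | p x (f x)} := by
  have h₁ : {x | p x (f x)} = ⋃ n, {x | f x = n} ∩ {x | p x n} := by ext; simp
  have h₂ : {x | p x (f x)}ᶜ = ⋃ n, {x | f x = n} ∩ {x | p x n}ᶜ := by ext; simp
  refine ⟨?_, ?_⟩
  · rw [h₁]; exact .iUnion_nat hξ fun n => (hf n).1.inter (hp n).1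
  · rw [PiZero, h₂]; exact .iUnion_nat hξ fun n => (hf n).1.inter (hp n).2

theorem DeltaZero.biInter_finset {ι : Type*} (hξ : 1 ≤ ξ) {f : ι → Set X} (s : Finset ι)
    (h : ∀ i ∈ s, DeltaZero X ξ (f i)) : DeltaZero X ξ (⋂ i ∈ s, f i) := by
  induction s using Finset.induction_on with
  | empty => simpa using deltaZero_of_isClopen (X := X) isClopen_univ hξ
  | insert a s _ ih =>
    rw [Finset.set_biInter_insert]
    exact (h a (s.mem_insert_self a)).inter (ih fun i hi => h i (Finset.mem_insert_of_mem hi))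

theorem deltaZero_setOf_run_eq (hξ : 1 ≤ ξ) {V : X → ℕ → Prop}
    (hV : ∀ s, DeltaZero X ξ {x | V x s}) (t : ℕ) (w : Hat) :
    DeltaZero X ξ {x | run (V x) t = w} := by
  have hfires (t n : ℕ) : DeltaZero X ξ {x | RunFires (V x) t n} :=
    (deltaZero_setOf_const hξ _).inter (hV _)
  have hcount (t : ℕ) : ∀ n, DeltaZero X ξ {x | runCount (V x) t = n} := by
    induction t with
    | zero => exact fun n => deltaZero_setOf_const hξ (0 = n)
    | succ t ih =>
      exact fun n => deltaZero_setOf_apply_of_fibers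
        (p := fun x c => (if RunFires (V x) t c then c + 1 else c) = n) hξ ih fun c =>
          deltaZero_setOf_ite_eq hξ (hfires t c) _ _ _
  exact deltaZero_setOf_apply_of_fibers
    (p := fun x c => (if RunFires (V x) t c then some (slotVal (Nat.unpair t).2) else none) = w)
    hξ (hcount t) fun c => deltaZero_setOf_ite_eq hξ (hfires t c) _ _ _

end DeltaCombinations

/-! ### The universal function -/

def SlotVerified (ξ : Ordinal.{0}) (Y : HatBaire) (s : ℕ) : Prop :=
  block s Y ∈ piCompleteSet (slotLevel ξ s)

def universalFun (ξ : Ordinal.{0}) (Z : HatBaire) : HatBaire :=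
  run (SlotVerified ξ (decodePoint Z))

theorem conciliatoryF_universalFun (ξ : Ordinal.{0}) : ConciliatoryF (universalFun ξ) :=
  fun Z Z' h => by rw [universalFun, universalFun, decodePoint_congr h]

theorem deltaZero_setOf_slotVerified {ξ : Ordinal.{0}} (hξ : 2 ≤ ξ) (hc : ξ.card ≤ ℵ₀)
    (s : ℕ) : DeltaZero HatBaire ξ {Z | SlotVerified ξ (decodePoint Z) s} := by
  have hlev := slotLevel_mem hξ hc s
  refine PiZero.deltaZero_of_lt (piZero_preimage_piCompleteSet (f := block s ∘ decodePoint)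
    hlev.1 (card_le_aleph0_of_lt hlev.2 hc) fun p c => ?_) hlev.2
  exact isOpen_setOf_decodePoint_eq_some _ _

theorem sigmaMeasurableH_universalFun {ξ : Ordinal.{0}} (hξ : 2 ≤ ξ) (hc : ξ.card ≤ ℵ₀) :
    SigmaMeasurableH ξ (universalFun ξ) := fun σ => by
  have : universalFun ξ ⁻¹' cylH σ =
      ⋂ i ∈ (Finset.univ : Finset (Fin σ.length)), {Z | universalFun ξ Z i = σ.get i} := by
    ext Z; simp [cylH]
  rw [this]
  exact (DeltaZero.biInter_finset (one_le_two.trans hξ) _ fun i _ =>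
    deltaZero_setOf_run_eq (one_le_two.trans hξ) (deltaZero_setOf_slotVerified hξ hc) _ _).1

theorem SigmaMeasurableH.exists_reductions_piCompleteSet {ξ : Ordinal.{0}}
    {G : HatBaire → HatBaire} (hG : SigmaMeasurableH ξ G) (hξ : 2 ≤ ξ) (hc : ξ.card ≤ ℵ₀) :
    ∃ (β : ℕ → ℕ → ℕ → Ordinal.{0}) (θ : ℕ → ℕ → ℕ → HatBaire → HatBaire),
      (∀ k v n, 1 ≤ β k v n ∧ β k v n < ξ) ∧ (∀ k v n, Continuous (θ k v n)) ∧
      ∀ X k v, (strip (G X)).get? k = some v ↔ ∃ n, θ k v n X ∈ piCompleteSet (β k v n) := by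
  have h1 : (1 : Ordinal) < ξ := one_lt_two.trans_le hξ
  choose f β hf hfeq using fun k v => (hG.sigmaZero_preimage h1.le
    (isOpen_setOf_strip_get?_eq_some k v)).exists_eq_iUnion h1
  choose θ hθ hθf using fun k v n => (hf k v n).2.exists_reduction_compl_piCompleteSet
    (card_le_aleph0_of_lt (hf k v n).1 hc)
  refine ⟨β, θ, fun k v n => ⟨(hf k v n).2.one_le, (hf k v n).1⟩, hθ, fun X k v => ?_⟩
  have hX : X ∈ G ⁻¹' {Y | (strip Y).get? k = some v} ↔ X ∈ ⋃ n, f k v n := by rw [← hfeq]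
  simp only [Set.mem_preimage, Set.mem_ofPred_eq, Set.mem_iUnion] at hX
  rw [hX]
  exact exists_congr fun n => by simpa using (hθf k v n X).not

/-- The `n`-th reduction for `(k, v)` is placed in its own slot of level `β k v n`, beyond the
columns touched by `P`; every other slot receives a point that no change on `P` verifies. -/
theorem exists_slot_assignment {ξ : Ordinal.{0}} (hξ : 2 ≤ ξ) (hc : ξ.card ≤ ℵ₀) {P : Set ℕ}
    (hP : P.Finite) {β : ℕ → ℕ → ℕ → Ordinal.{0}} (hβ : ∀ k v n, 1 ≤ β k v n ∧ β k v n < ξ)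
    {θ : ℕ → ℕ → ℕ → HatBaire → HatBaire} (hθ : ∀ k v n, Continuous (θ k v n)) :
    ∃ Θ : HatBaire → HatBaire, Continuous Θ ∧ ∀ X Y, (∀ m ∉ P, Y m = Θ X m) →
      (∀ s, SlotVerified ξ Y s →
        ∃ n, θ (slotKey s) (slotVal s) n X ∈ piCompleteSet (β (slotKey s) (slotVal s) n)) ∧
      ∀ k v n, θ k v n X ∈ piCompleteSet (β k v n) →
        ∃ s, SlotVerified ξ Y s ∧ slotKey s = k ∧ slotVal s = v := by
  obtain ⟨N, hN⟩ : ∃ N, ∀ m ∈ P, (Nat.unpair m).1 < N := by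
    obtain ⟨N, hN⟩ := (hP.image fun m => (Nat.unpair m).1).bddAbove
    exact ⟨N + 1, fun m hm => Nat.lt_succ_of_le (hN ⟨m, hm, rfl⟩)⟩
  choose a ha using fun k v n => exists_levelSeq_pair_eq hξ hc (hβ k v n).1 (hβ k v n).2
  let slot (k v n : ℕ) : ℕ := mkSlot k v (Nat.pair (a k v n) (N + n))
  let idx (s : ℕ) : ℕ := (Nat.unpair (Nat.unpair (Nat.unpair s).2).2).2 - N
  have hidx (k v n : ℕ) : idx (slot k v n) = n := by simp [idx, slot, mkSlot]
  have hslot (k v n : ℕ) : N ≤ slot k v n :=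
    calc N ≤ N + n := Nat.le_add_right N n
      _ ≤ _ := (Nat.right_le_pair _ _).trans ((Nat.right_le_pair _ _).trans (Nat.right_le_pair _ _))
  choose D hD using fun s => exists_forall_not_mem_piCompleteSet (slotLevel_mem hξ hc s).1
    (card_le_aleph0_of_lt (slotLevel_mem hξ hc s).2 hc) (P := {j | Nat.pair s j ∈ P})
    (hP.preimage fun _ _ _ _ h => (Nat.pair_eq_pair.mp h).2)
  let B (s : ℕ) : HatBaire → HatBaire :=
    if s = slot (slotKey s) (slotVal s) (idx s) then θ (slotKey s) (slotVal s) (idx s)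
    else fun _ => D s
  have hB (s : ℕ) : Continuous (B s) := by
    dsimp only [B]; split_ifs
    exacts [hθ _ _ _, continuous_const]
  refine ⟨fun X => unblock fun s => B s X, continuous_unblock hB, fun X Y hY => ?_⟩
  have hblock (s j : ℕ) (hj : Nat.pair s j ∉ P) : block s Y j = B s X j := by
    simp only [block, hY _ hj, unblock, Nat.unpair_pair]
  have hassigned (k v n : ℕ) :
      SlotVerified ξ Y (slot k v n) ↔ θ k v n X ∈ piCompleteSet (β k v n) := by
    have : block (slot k v n) Y = θ k v n X := by
      ext j
      rw [hblock _ _ fun hj => absurd (hslot k v n) (by simpa using hN _ hj)]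
      simp [B, hidx, slot]
    simp [SlotVerified, this, slot, ha]
  have hunassigned (s : ℕ) (hs : s ≠ slot (slotKey s) (slotVal s) (idx s)) :
      ¬ SlotVerified ξ Y s :=
    hD s (block s Y) fun j hj => by rw [hblock s j hj]; simp [B, hs]
  refine ⟨fun s hs => ?_, fun k v n h => ⟨slot k v n, (hassigned k v n).mpr h, by simp [slot],
    by simp [slot]⟩⟩
  by_cases hsa : s = slot (slotKey s) (slotVal s) (idx s)
  · rw [hsa] at hs
    exact ⟨idx s, (hassigned _ _ _).mp hs⟩
  · exact absurd hs (hunassigned s hsa)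

theorem exists_reduction_to_universalFun {ξ : Ordinal.{0}} (hξ : 2 ≤ ξ) (hc : ξ.card ≤ ℵ₀)
    (τ : List Hat) {G : HatBaire → HatBaire} (hG : SigmaMeasurableH ξ G) :
    ∃ θ : HatBaire → HatBaire, Continuous θ ∧ (∀ X, θ X ∈ cylH τ) ∧
      PEquiv G (universalFun ξ ∘ θ) := by
  obtain ⟨β, θ, hβ, hθ, hGθ⟩ := hG.exists_reductions_piCompleteSet hξ hc
  obtain ⟨E, P, hE, hEτ, hP, hdecode⟩ := exists_encoding_in_cylH τ
  obtain ⟨Θ, hΘ, hslots⟩ := exists_slot_assignment hξ hc hP hβ hθ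
  refine ⟨E ∘ Θ, hE.comp hΘ, fun X => hEτ _, fun X => ?_⟩
  obtain ⟨h₁, h₂⟩ := hslots X _ (hdecode (Θ X))
  refine (strip_run_eq (fun s hs => (hGθ X _ _).mpr (h₁ s hs)) fun k v hkv => ?_).symm
  obtain ⟨n, hn⟩ := (hGθ X k v).mp hkv
  exact h₂ k v n hn

/-- For every countable ordinal `α` there is a conciliatory function
`U : ω̂^ω → ω̂^ω` that is simultaneously `Σ⁰_{1+ω^α}`-universal and initializable. -/
theorem exists_transfinite_universal_initializable (α : Ordinal.{0}) (hα : IsCountableOrd α) :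
    ∃ U : HatBaire → HatBaire,
      ConciliatoryF U ∧ SigmaUniversal (1 + Ordinal.omega0 ^ α) U ∧ InitializableH U := by
  have hξ := two_le_one_add_omega0_opow α
  have hc := card_one_add_omega0_opow_le hα
  refine ⟨universalFun _, conciliatoryF_universalFun _,
    ⟨sigmaMeasurableH_universalFun hξ hc, fun G _ hG => ?_⟩, fun τ => ?_⟩
  · obtain ⟨θ, hθ, -, hGθ⟩ := exists_reduction_to_universalFun hξ hc [] hG
    exact ⟨θ, hθ, hGθ⟩
  · exact exists_reduction_to_universalFun hξ hc τ (sigmaMeasurableH_universalFun hξ hc)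

end WadgeStudy
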